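/- Let ω : ℝ with ω ≠ 0, let k₁ k₂ : ℕ and p q : ℝ, and define M : ℂ → ℂ for ξ ≠ 0 by M ξ = ξ ^ k₁ * (starRingEnd ℂ ξ) ^ k₂ * (‖ξ‖ ^ p : ℝ) * Complex.exp (Complex.I * q * Real.log ‖ξ‖). Then (for all t : ℝ and all ξ ≠ 0, M (Complex.exp (Complex.I * ω * t) * ξ) = Complex.exp (Complex.I * ω * t) * M ξ) if and only if k₁ = k₂ + 1. -/

import Mathlib

/-!
A unimodular `u` satisfies `‖u ξ‖ = ‖ξ‖` and `conj u = u⁻¹`, so the modulus factors of the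
monomial are rotation invariant and `M (u ξ) = u ^ (k₁ - k₂) M ξ`. Since `M 1 = 1`, resonance means
`u ^ (k₁ - k₂) = u` for every `u = exp (i ω t)`; as `ω ≠ 0`, some `t` makes
`exp (i ω t (k₁ - k₂ - 1)) = exp (i π) = -1` unless `k₁ - k₂ - 1 = 0`.
-/

open Complex

noncomputable def fracMonomial (k₁ k₂ : ℕ) (p q : ℝ) (ξ : ℂ) : ℂ :=
  ξ ^ k₁ * (starRingEnd ℂ ξ) ^ k₂ * ((‖ξ‖ ^ p : ℝ) : ℂ)
    * exp (I * (q : ℂ) * ((Real.log ‖ξ‖ : ℝ) : ℂ))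

lemma fracMonomial_one (k₁ k₂ : ℕ) (p q : ℝ) : fracMonomial k₁ k₂ p q 1 = 1 := by
  simp [fracMonomial]

lemma fracMonomial_mul_of_norm_eq_one (k₁ k₂ : ℕ) (p q : ℝ) {u : ℂ} (hu : ‖u‖ = 1) (ξ : ℂ) :
    fracMonomial k₁ k₂ p q (u * ξ) = u ^ ((k₁ : ℤ) - k₂) * fracMonomial k₁ k₂ p q ξ := by
  have hu₀ : u ≠ 0 := norm_ne_zero_iff.mp (hu ▸ one_ne_zero)
  have hpow : u ^ ((k₁ : ℤ) - k₂) = u ^ k₁ * u⁻¹ ^ k₂ := by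
    rw [zpow_sub₀ hu₀, zpow_natCast, zpow_natCast, div_eq_mul_inv, inv_pow]
  simp only [fracMonomial, norm_mul, hu, one_mul, map_mul, mul_pow, hpow,
    ← RCLike.inv_eq_conj hu]
  ring

lemma forall_exp_mul_zpow_eq_self_iff {ω : ℝ} (hω : ω ≠ 0) (n : ℤ) :
    (∀ t : ℝ, exp (I * ω * t) ^ n = exp (I * ω * t)) ↔ n = 1 := by
  refine ⟨fun h => ?_, by rintro rfl t; exact zpow_one _⟩
  by_contra hn
  have hn' : (n : ℂ) - 1 ≠ 0 := sub_ne_zero.mpr (by exact_mod_cast hn)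
  set z : ℂ := I * ω * ((Real.pi / (ω * (n - 1)) : ℝ) : ℂ)
  have hω' : (ω : ℂ) ≠ 0 := ofReal_ne_zero.mpr hω
  have hz : ((n : ℂ) - 1) * z = Real.pi * I := by
    simp only [z]
    push_cast
    field_simp
  have hexp : exp (((n : ℂ) - 1) * z) = 1 := by
    rw [sub_mul, one_mul, exp_sub, exp_int_mul, h, div_self (exp_ne_zero _)]
  rw [hz, exp_pi_mul_I] at hexp
  norm_num at hexp

/-- Resonance characterization: under the rotational flow `ξ ↦ e^{iωt}ξ` with
`ω ≠ 0`, the generalized monomial `ξ^{k₁} ξ̄^{k₂} |ξ|^{p} e^{i q log|ξ|}`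
transforms exactly like `ξ` itself iff `k₁ = k₂ + 1`. -/
theorem stmt_4 (ω : ℝ) (hω : ω ≠ 0) (k₁ k₂ : ℕ) (p q : ℝ) (M : ℂ → ℂ)
    (hM : ∀ ξ : ℂ, ξ ≠ 0 →
      M ξ = ξ ^ k₁ * (starRingEnd ℂ ξ) ^ k₂ * ((‖ξ‖ ^ p : ℝ) : ℂ)
        * Complex.exp (Complex.I * (q : ℂ) * ((Real.log ‖ξ‖ : ℝ) : ℂ))) :
    (∀ (t : ℝ) (ξ : ℂ), ξ ≠ 0 →
        M (Complex.exp (Complex.I * (ω : ℂ) * (t : ℂ)) * ξ)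
          = Complex.exp (Complex.I * (ω : ℂ) * (t : ℂ)) * M ξ)
      ↔ k₁ = k₂ + 1 := by
  have hnorm (t : ℝ) : ‖exp (I * ω * t)‖ = 1 := by
    rw [mul_assoc, ← ofReal_mul]; exact norm_exp_I_mul_ofReal _
  have hrot (t : ℝ) (ξ : ℂ) (hξ : ξ ≠ 0) : M (exp (I * ω * t) * ξ)
      = exp (I * ω * t) ^ ((k₁ : ℤ) - k₂) * M ξ := by
    rw [hM _ (mul_ne_zero (exp_ne_zero _) hξ), hM ξ hξ]
    exact fracMonomial_mul_of_norm_eq_one k₁ k₂ p q (hnorm t) ξ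
  have hM₁ : M 1 = 1 := (hM 1 one_ne_zero).trans (fracMonomial_one k₁ k₂ p q)
  calc (∀ (t : ℝ) (ξ : ℂ), ξ ≠ 0 → M (exp (I * ω * t) * ξ) = exp (I * ω * t) * M ξ)
      ↔ ∀ t : ℝ, exp (I * ω * t) ^ ((k₁ : ℤ) - k₂) = exp (I * ω * t) := by
        refine ⟨fun h t => ?_, fun h t ξ hξ => by rw [hrot t ξ hξ, h t]⟩
        have h₁ := h t 1 one_ne_zero
        rwa [hrot t 1 one_ne_zero, hM₁, mul_one, mul_one] at h₁
    _ ↔ (k₁ : ℤ) - k₂ = 1 := forall_exp_mul_zpow_eq_self_iff hω _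
    _ ↔ k₁ = k₂ + 1 := by omega
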